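/- Let f ∈ L²(ℝ) be C¹ with f' ∈ L²(ℝ), let δ > 0, let (x_k)_{k∈ℤ} be an increasing sequence of reals with consecutive gaps at most δ, and let (I_k) be pairwise disjoint measurable sets with I_k ⊆ (x_k − δ/2, x_k + δ/2) and ⋃_k I_k = ℝ. Then ‖f − Σ_k f(x_k)·1_{I_k}‖_{L²} ≤ √2 · δ · ‖f'‖_{L²}. -/

import Mathlib

/-!
For `t ∈ I k` both `t` and `x k` lie in `J k = (x k - δ/2, x k + δ/2)`, so the fundamental theorem
of calculus and Cauchy–Schwarz give `|f t - f (x k)|² ≤ δ ∫_{J k} |f'|²`. Integrating over `I k`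
and summing over `k` bounds `‖f - Σ f(x k) 1_{I k}‖²` by `δ ∫ |f' s|² Σ_{k : s ∈ J k} |I k| ds`, and
the sets `I k` with `s ∈ J k` are disjoint subsets of `(s - δ, s + δ)`, so the weight is at most `2δ`.
-/

open MeasureTheory Set Metric
open scoped ENNReal

theorem sq_eLpNorm_two {α E : Type*} [MeasurableSpace α] {μ : Measure α} [NormedAddCommGroup E]
    (u : α → E) : eLpNorm u 2 μ ^ 2 = ∫⁻ a, ‖u a‖ₑ ^ 2 ∂μ := by
  simpa using eLpNorm_nnreal_pow_eq_lintegral (f := u) (μ := μ) (p := 2) two_ne_zero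

theorem eLpNorm_two_le_mul_of_lintegral_sq_le {α E F : Type*} [MeasurableSpace α] {μ : Measure α}
    [NormedAddCommGroup E] [NormedAddCommGroup F] {f : α → E} {g : α → F} {c : ℝ≥0∞}
    (h : ∫⁻ a, ‖f a‖ₑ ^ 2 ∂μ ≤ c ^ 2 * ∫⁻ a, ‖g a‖ₑ ^ 2 ∂μ) :
    eLpNorm f 2 μ ≤ c * eLpNorm g 2 μ := by
  rwa [← ENNReal.pow_le_pow_left_iff two_ne_zero, mul_pow, sq_eLpNorm_two, sq_eLpNorm_two]

theorem sq_lintegral_le_measure_univ_mul_lintegral_sq {α : Type*} [MeasurableSpace α]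
    (μ : Measure α) {g : α → ℝ≥0∞} (hg : AEMeasurable g μ) :
    (∫⁻ a, g a ∂μ) ^ 2 ≤ μ univ * ∫⁻ a, g a ^ 2 ∂μ := by
  have hHolder := ENNReal.lintegral_mul_le_Lp_mul_Lq μ Real.HolderConjugate.two_two hg
    (aemeasurable_const (b := (1 : ℝ≥0∞)))
  simp only [Pi.mul_apply, mul_one, one_pow, lintegral_const, one_mul,
    ENNReal.rpow_two] at hHolder
  calc (∫⁻ a, g a ∂μ) ^ 2
      ≤ ((∫⁻ a, g a ^ 2 ∂μ) ^ (1 / 2 : ℝ) * μ univ ^ (1 / 2 : ℝ)) ^ 2 := by gcongr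
    _ = μ univ * ∫⁻ a, g a ^ 2 ∂μ := by
      rw [mul_pow, ← ENNReal.rpow_two, ← ENNReal.rpow_two, ← ENNReal.rpow_mul,
        ← ENNReal.rpow_mul]
      norm_num [mul_comm]

theorem enorm_sub_sq_le_volume_mul_lintegral_deriv_sq {E : Type*} [NormedAddCommGroup E]
    [NormedSpace ℝ E] {f : ℝ → E} (hf : ContDiff ℝ 1 f) {J : Set ℝ} (hJ : J.OrdConnected)
    {a b : ℝ} (ha : a ∈ J) (hb : b ∈ J) :
    ‖f b - f a‖ₑ ^ 2 ≤ volume J * ∫⁻ x in J, ‖deriv f x‖ₑ ^ 2 := by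
  wlog hab : a ≤ b generalizing a b
  · rw [enorm_sub_rev]
    exact this hb ha (le_of_not_ge hab)
  have hmeas : Measurable fun x => ‖deriv f x‖ₑ := (hf.continuous_deriv le_rfl).enorm.measurable
  calc ‖f b - f a‖ₑ ^ 2 ≤ (∫⁻ x in Icc a b, ‖deriv f x‖ₑ) ^ 2 := by
        gcongr
        exact enorm_sub_le_lintegral_deriv_of_contDiffOn_Icc hf.contDiffOn hab
    _ ≤ volume (Icc a b) * ∫⁻ x in Icc a b, ‖deriv f x‖ₑ ^ 2 := by
        simpa only [Measure.restrict_apply_univ] using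
          sq_lintegral_le_measure_univ_mul_lintegral_sq (volume.restrict (Icc a b))
            hmeas.aemeasurable
    _ ≤ volume J * ∫⁻ x in J, ‖deriv f x‖ₑ ^ 2 := by
        gcongr <;> exact hJ.out ha hb

theorem tsum_indicator_apply_of_mem {ι α M : Type*} [AddCommMonoid M] [TopologicalSpace M]
    {I : ι → Set α} (hI : Pairwise (Function.onFun Disjoint I)) (c : ι → M) {k : ι} {t : α}
    (ht : t ∈ I k) : ∑' j, (I j).indicator (fun _ => c j) t = c k := by
  rw [tsum_eq_single k fun j hj => indicator_of_notMem
    (fun htj => disjoint_left.1 (hI hj) htj ht) _]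
  exact indicator_of_mem ht _

theorem lintegral_le_tsum_mul_measure_of_iUnion_eq_univ {α ι : Type*} [MeasurableSpace α]
    [Countable ι] {μ : Measure α} {I : ι → Set α} (hmeas : ∀ k, MeasurableSet (I k))
    (hdisj : Pairwise (Function.onFun Disjoint I)) (hcover : ⋃ k, I k = univ)
    {h : α → ℝ≥0∞} {b : ι → ℝ≥0∞} (hb : ∀ k, ∀ t ∈ I k, h t ≤ b k) :
    ∫⁻ t, h t ∂μ ≤ ∑' k, b k * μ (I k) := by
  rw [← setLIntegral_univ, ← hcover, lintegral_iUnion hmeas hdisj]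
  gcongr with k
  exact (setLIntegral_mono' (hmeas k) (hb k)).trans_eq (setLIntegral_const _ _)

theorem tsum_setLIntegral_mul_eq_lintegral_tsum_indicator_mul {α ι : Type*} [MeasurableSpace α]
    [Countable ι] {μ : Measure α} {J : ι → Set α} (hJ : ∀ k, MeasurableSet (J k))
    (c : ι → ℝ≥0∞) {g : α → ℝ≥0∞} (hg : Measurable g) :
    ∑' k, (∫⁻ s in J k, g s ∂μ) * c k =
      ∫⁻ s, (∑' k, (J k).indicator (fun _ => c k) s) * g s ∂μ := by
  simp_rw [← ENNReal.tsum_mul_right]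
  rw [lintegral_tsum (f := fun k s => (J k).indicator (fun _ => c k) s * g s)
    fun k => ((measurable_const.indicator (hJ k)).mul hg).aemeasurable]
  congr 1 with k
  rw [← lintegral_mul_const _ hg, ← lintegral_indicator (hJ k)]
  congr 1 with s
  by_cases hs : s ∈ J k <;> simp [hs, mul_comm]

theorem tsum_indicator_ball_measure_le {α ι : Type*} [PseudoMetricSpace α] [MeasurableSpace α]
    [Countable ι] (μ : Measure α) {I : ι → Set α} (hmeas : ∀ k, MeasurableSet (I k))
    (hdisj : Pairwise (Function.onFun Disjoint I)) {x : ι → α} {r : ℝ}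
    (hsub : ∀ k, I k ⊆ ball (x k) r) (s : α) :
    ∑' k, (ball (x k) r).indicator (fun _ => μ (I k)) s ≤ μ (ball s (2 * r)) :=
  calc ∑' k, (ball (x k) r).indicator (fun _ => μ (I k)) s
      ≤ ∑' k, μ.restrict (ball s (2 * r)) (I k) := by
        refine ENNReal.tsum_le_tsum fun k => ?_
        by_cases hs : s ∈ ball (x k) r
        · rw [indicator_of_mem hs, Measure.restrict_eq_self]
          intro y hy
          rw [mem_ball] at hs ⊢
          have := mem_ball.1 (hsub k hy)
          linarith [dist_triangle y (x k) s, dist_comm s (x k)]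
        · rw [indicator_of_notMem hs]
          exact zero_le
    _ = μ.restrict (ball s (2 * r)) (⋃ k, I k) := (measure_iUnion hdisj hmeas).symm
    _ ≤ μ (ball s (2 * r)) :=
        (measure_mono (subset_univ _)).trans_eq (Measure.restrict_apply_univ _)

theorem stmt2_general (f : ℝ → ℂ) (hf : ContDiff ℝ 1 f)
    (δ : ℝ) (hδ : 0 < δ)
    (x : ℤ → ℝ)
    (I : ℤ → Set ℝ) (hmeas : ∀ k, MeasurableSet (I k))
    (hdisj : Pairwise (Function.onFun Disjoint I))
    (hsub : ∀ k, I k ⊆ Set.Ioo (x k - δ/2) (x k + δ/2))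
    (hcover : (⋃ k, I k) = Set.univ) :
    eLpNorm (fun t => f t - ∑' k : ℤ, Set.indicator (I k) (fun _ => f (x k)) t) 2 volume
      ≤ ENNReal.ofReal (Real.sqrt 2 * δ) * eLpNorm (deriv f) 2 volume := by
  set J : ℤ → Set ℝ := fun k => ball (x k) (δ / 2)
  have hIJ : ∀ k, I k ⊆ J k := fun k => by simpa only [J, Real.ball_eq_Ioo] using hsub k
  have hvolJ : ∀ k, volume (J k) = ENNReal.ofReal δ := fun k => by
    rw [Real.volume_ball]; ring_nf
  have hg : Measurable fun s => ‖deriv f s‖ₑ ^ 2 :=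
    (hf.continuous_deriv le_rfl).enorm.measurable.pow_const 2
  have hpointwise : ∀ k, ∀ t ∈ I k,
      ‖f t - ∑' j, (I j).indicator (fun _ => f (x j)) t‖ₑ ^ 2 ≤
        ENNReal.ofReal δ * ∫⁻ s in J k, ‖deriv f s‖ₑ ^ 2 := fun k t ht => by
    rw [tsum_indicator_apply_of_mem hdisj _ ht, ← hvolJ k]
    exact enorm_sub_sq_le_volume_mul_lintegral_deriv_sq hf (convex_ball _ _).ordConnected
      (mem_ball_self (by positivity)) (hIJ k ht)
  refine eLpNorm_two_le_mul_of_lintegral_sq_le ?_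
  calc _ ≤ ∑' k, ENNReal.ofReal δ * (∫⁻ s in J k, ‖deriv f s‖ₑ ^ 2) * volume (I k) :=
        lintegral_le_tsum_mul_measure_of_iUnion_eq_univ hmeas hdisj hcover hpointwise
    _ = ENNReal.ofReal δ *
          ∫⁻ s, (∑' k, (J k).indicator (fun _ => volume (I k)) s) * ‖deriv f s‖ₑ ^ 2 := by
        simp_rw [mul_assoc, ENNReal.tsum_mul_left]
        rw [tsum_setLIntegral_mul_eq_lintegral_tsum_indicator_mul
          (fun k => isOpen_ball.measurableSet) _ hg]
    _ ≤ ENNReal.ofReal δ * ∫⁻ s, ENNReal.ofReal (2 * δ) * ‖deriv f s‖ₑ ^ 2 := by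
        gcongr with s
        refine (tsum_indicator_ball_measure_le volume hmeas hdisj hIJ s).trans_eq ?_
        rw [Real.volume_ball]; ring_nf
    _ = ENNReal.ofReal (√2 * δ) ^ 2 * ∫⁻ s, ‖deriv f s‖ₑ ^ 2 := by
        rw [lintegral_const_mul _ hg, ← mul_assoc, ← ENNReal.ofReal_mul hδ.le,
          ← ENNReal.ofReal_pow (by positivity), mul_pow, Real.sq_sqrt zero_le_two]
        ring_nf

/-- Let `f ∈ L²(ℝ)` be `C¹` with `f' ∈ L²(ℝ)`, `δ > 0`, let
`(x_k)_{k∈ℤ}` be an increasing sequence with consecutive gaps at most `δ`, and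
let `(I_k)` be pairwise disjoint measurable sets with
`I_k ⊆ (x_k − δ/2, x_k + δ/2)` and `⋃_k I_k = ℝ`.  Then
`‖f − Σ_k f(x_k)·1_{I_k}‖_{L²} ≤ √2 · δ · ‖f'‖_{L²}`. -/
theorem stmt2 (f : ℝ → ℂ) (hf : ContDiff ℝ 1 f)
    (hf2 : MemLp f 2 (volume : Measure ℝ))
    (hf' : MemLp (deriv f) 2 (volume : Measure ℝ))
    (δ : ℝ) (hδ : 0 < δ)
    (x : ℤ → ℝ) (hmono : StrictMono x)
    (hgap : ∀ k : ℤ, x (k + 1) - x k ≤ δ)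
    (I : ℤ → Set ℝ) (hmeas : ∀ k, MeasurableSet (I k))
    (hdisj : Pairwise (Function.onFun Disjoint I))
    (hsub : ∀ k, I k ⊆ Set.Ioo (x k - δ/2) (x k + δ/2))
    (hcover : (⋃ k, I k) = Set.univ) :
    eLpNorm (fun t => f t - ∑' k : ℤ, Set.indicator (I k) (fun _ => f (x k)) t) 2 volume
      ≤ ENNReal.ofReal (Real.sqrt 2 * δ) * eLpNorm (deriv f) 2 volume :=
  stmt2_general f hf δ hδ x I hmeas hdisj hsub hcover
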